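/- arXiv:1502.01893 — 4 statements merged into one kernel-verified Lean document; each statement's English description precedes it below -/
import Mathlib

section
/- Any triangle contained in a rectangle has area at most half the area of the rectangle. -/
lemma key_cross_bound (a b c d e f w h : ℝ)
    (ha : 0 ≤ a) (ha' : a ≤ w) (hc : 0 ≤ c) (hc' : c ≤ w) (he : 0 ≤ e) (he' : e ≤ w)
    (hb : 0 ≤ b) (hb' : b ≤ h) (hd : 0 ≤ d) (hd' : d ≤ h) (hf : 0 ≤ f) (hf' : f ≤ h) :
    (c - a) * (f - b) - (d - b) * (e - a) ≤ w * h := by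
  rcases le_total b f with h1 | h1 <;> rcases le_total f d with h2 | h2 <;>
    rcases le_total d b with h3 | h3 <;>
    nlinarith [mul_nonneg (sub_nonneg.2 hc') (sub_nonneg.2 h1),
      mul_nonneg hc (sub_nonneg.2 h1),
      mul_nonneg ha (sub_nonneg.2 h2), mul_nonneg (sub_nonneg.2 ha') (sub_nonneg.2 h2),
      mul_nonneg he (sub_nonneg.2 h3), mul_nonneg (sub_nonneg.2 he') (sub_nonneg.2 h3)]

/-- A triangle whose vertices lie in a rectangle `[x₁, x₂] × [y₁, y₂]` has area
(computed via the cross-product formula) at most half the area of the rectangle. -/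
theorem triangle_in_rectangle_area_le_half
    (x₁ x₂ y₁ y₂ : ℝ) (A B C : ℝ × ℝ)
    (hA : A.1 ∈ Set.Icc x₁ x₂ ∧ A.2 ∈ Set.Icc y₁ y₂)
    (hB : B.1 ∈ Set.Icc x₁ x₂ ∧ B.2 ∈ Set.Icc y₁ y₂)
    (hC : C.1 ∈ Set.Icc x₁ x₂ ∧ C.2 ∈ Set.Icc y₁ y₂) :
    |(B.1 - A.1) * (C.2 - A.2) - (B.2 - A.2) * (C.1 - A.1)| / 2
      ≤ (x₂ - x₁) * (y₂ - y₁) / 2 := by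
  obtain ⟨⟨ha1, ha2⟩, ⟨ha3, ha4⟩⟩ := hA
  obtain ⟨⟨hb1, hb2⟩, ⟨hb3, hb4⟩⟩ := hB
  obtain ⟨⟨hc1, hc2⟩, ⟨hc3, hc4⟩⟩ := hC
  have h1 := key_cross_bound (A.1 - x₁) (A.2 - y₁) (B.1 - x₁) (B.2 - y₁) (C.1 - x₁) (C.2 - y₁)
    (x₂ - x₁) (y₂ - y₁) (by linarith) (by linarith) (by linarith) (by linarith) (by linarith)
    (by linarith) (by linarith) (by linarith) (by linarith) (by linarith) (by linarith)
    (by linarith)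
  have h2 := key_cross_bound (A.1 - x₁) (A.2 - y₁) (C.1 - x₁) (C.2 - y₁) (B.1 - x₁) (B.2 - y₁)
    (x₂ - x₁) (y₂ - y₁) (by linarith) (by linarith) (by linarith) (by linarith) (by linarith)
    (by linarith) (by linarith) (by linarith) (by linarith) (by linarith) (by linarith)
    (by linarith)
  have : |(B.1 - A.1) * (C.2 - A.2) - (B.2 - A.2) * (C.1 - A.1)| ≤ (x₂ - x₁) * (y₂ - y₁) := by
    rw [abs_le]; constructor <;> nlinarith
  linarith
end

section
/- Given 101 points in the unit square with no three collinear, there exist three of them forming a triangle of area at most 1/100. -/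
lemma pivot_bound (a b c d : ℝ) (ha : |a| ≤ 1) (hc : |c| ≤ 1) :
    |a * d - c * b| ≤ |d| + |b| := by
  calc |a * d - c * b| ≤ |a * d| + |c * b| := abs_sub _ _
    _ = |a| * |d| + |c| * |b| := by rw [abs_mul, abs_mul]
    _ ≤ 1 * |d| + 1 * |b| := by gcongr
    _ = |d| + |b| := by ring

lemma det_bound (u1 u2 u3 v1 v2 v3 h : ℝ)
    (h1 : 0 ≤ u1) (h1' : u1 ≤ 1) (h2 : 0 ≤ u2) (h2' : u2 ≤ 1)
    (h3 : 0 ≤ u3) (h3' : u3 ≤ 1)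
    (h12 : |v1 - v2| ≤ h) (h13 : |v1 - v3| ≤ h) (h23 : |v2 - v3| ≤ h) :
    |(u2 - u1) * (v3 - v1) - (v2 - v1) * (u3 - u1)| ≤ h := by
  have hu12 : |u2 - u1| ≤ 1 := abs_le.2 ⟨by linarith, by linarith⟩
  have hu13 : |u3 - u1| ≤ 1 := abs_le.2 ⟨by linarith, by linarith⟩
  have hu23 : |u3 - u2| ≤ 1 := abs_le.2 ⟨by linarith, by linarith⟩
  have P1 : |(u2 - u1) * (v3 - v1) - (v2 - v1) * (u3 - u1)| ≤ |v3 - v1| + |v2 - v1| := by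
    have := pivot_bound (u2 - u1) (v2 - v1) (u3 - u1) (v3 - v1) hu12 hu13
    convert this using 2; ring
  have P2 : |(u2 - u1) * (v3 - v1) - (v2 - v1) * (u3 - u1)| ≤ |v3 - v2| + |v1 - v2| := by
    have := pivot_bound (u1 - u2) (v1 - v2) (u3 - u2) (v3 - v2) (by rwa [abs_sub_comm]) hu23
    rw [show (u2 - u1) * (v3 - v1) - (v2 - v1) * (u3 - u1)
        = -((u1 - u2) * (v3 - v2) - (u3 - u2) * (v1 - v2)) by ring, abs_neg]
    convert this using 2
  have P3 : |(u2 - u1) * (v3 - v1) - (v2 - v1) * (u3 - u1)| ≤ |v2 - v3| + |v1 - v3| := by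
    have := pivot_bound (u1 - u3) (v1 - v3) (u2 - u3) (v2 - v3) (by rwa [abs_sub_comm]) (by rwa [abs_sub_comm])
    rw [show (u2 - u1) * (v3 - v1) - (v2 - v1) * (u3 - u1)
        = ((u1 - u3) * (v2 - v3) - (u2 - u3) * (v1 - v3)) by ring]
    convert this using 2
  have e12 := abs_le.1 h12
  have e13 := abs_le.1 h13
  have e23 := abs_le.1 h23
  rcases le_total v1 v2 with a12 | a12 <;> rcases le_total v1 v3 with a13 | a13 <;>
    rcases le_total v2 v3 with a23 | a23
  · refine le_trans P2 ?_
    rw [abs_of_nonneg (by linarith), abs_of_nonpos (by linarith)]; linarith [e13.1]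
  · refine le_trans P3 ?_
    rw [abs_of_nonneg (by linarith), abs_of_nonpos (by linarith)]; linarith [e12.1]
  · refine le_trans P1 ?_
    rw [abs_of_nonpos (by linarith), abs_of_nonneg (by linarith)]; linarith [e23.2]
  · refine le_trans P1 ?_
    rw [abs_of_nonpos (by linarith), abs_of_nonneg (by linarith)]; linarith [e23.2]
  · refine le_trans P1 ?_
    rw [abs_of_nonneg (by linarith), abs_of_nonpos (by linarith)]; linarith [e23.1]
  · refine le_trans P1 ?_
    rw [abs_of_nonneg (by linarith), abs_of_nonpos (by linarith)]; linarith [e23.1]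
  · refine le_trans P3 ?_
    rw [abs_of_nonpos (by linarith), abs_of_nonneg (by linarith)]; linarith [e12.2]
  · refine le_trans P2 ?_
    rw [abs_of_nonpos (by linarith), abs_of_nonneg (by linarith)]; linarith [e13.2]
lemma strip_mem (y : ℝ) (m : ℕ) (hm : m = min (⌊50 * y⌋.toNat) 49)
    (hy0 : 0 ≤ y) (hy1 : y ≤ 1) :
    (m : ℝ) / 50 ≤ y ∧ y ≤ ((m : ℝ) + 1) / 50 := by
  have h0 : (0:ℤ) ≤ ⌊50 * y⌋ := Int.floor_nonneg.2 (by linarith)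
  have fl : (⌊50 * y⌋ : ℝ) ≤ 50 * y := Int.floor_le _
  have fu : 50 * y < (⌊50 * y⌋ : ℝ) + 1 := Int.lt_floor_add_one _
  have hmle : (m : ℤ) ≤ ⌊50 * y⌋ := by omega
  have hmler : (m : ℝ) ≤ (⌊50 * y⌋ : ℝ) := by exact_mod_cast hmle
  refine ⟨by linarith, ?_⟩
  rcases le_or_gt (⌊50 * y⌋.toNat) 49 with hle | hlt
  · have heq : (m : ℤ) = ⌊50 * y⌋ := by omega
    have : (m : ℝ) = (⌊50 * y⌋ : ℝ) := by exact_mod_cast heq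
    linarith
  · have h49 : m = 49 := by omega
    rw [h49]; norm_num; linarith

/-- Given 101 points in the unit square with no three collinear, some three of
them form a triangle of area at most `1/100`. -/
theorem exists_small_triangle_of_101_points
    (f : Fin 101 → ℝ × ℝ)
    (hf : ∀ i, (f i).1 ∈ Set.Icc (0 : ℝ) 1 ∧ (f i).2 ∈ Set.Icc (0 : ℝ) 1)
    (hcol : ∀ i j k : Fin 101, i ≠ j → j ≠ k → i ≠ k →
      ¬ Collinear ℝ ({f i, f j, f k} : Set (ℝ × ℝ))) :
    ∃ i j k : Fin 101, i ≠ j ∧ j ≠ k ∧ i ≠ k ∧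
      |((f j).1 - (f i).1) * ((f k).2 - (f i).2) -
        ((f j).2 - (f i).2) * ((f k).1 - (f i).1)| / 2 ≤ 1 / 100 := by
  set g : Fin 101 → Fin 50 := fun i =>
    ⟨min (⌊50 * (f i).2⌋.toNat) 49, by omega⟩ with hg
  obtain ⟨m, hm⟩ := Fintype.exists_lt_card_fiber_of_mul_lt_card (f := g) (n := 2)
    (by simp)
  obtain ⟨t, hts, htc⟩ := Finset.exists_subset_card_eq (n := 3) (by omega :
    3 ≤ (Finset.univ.filter fun x => g x = m).card)
  obtain ⟨i, j, k, hij, hik, hjk, rfl⟩ := Finset.card_eq_three.1 htc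
  have key : ∀ x ∈ ({i, j, k} : Finset (Fin 101)),
      ((m : ℕ) : ℝ) / 50 ≤ (f x).2 ∧ (f x).2 ≤ (((m : ℕ) : ℝ) + 1) / 50 := by
    intro x hx
    have hgx : g x = m := (Finset.mem_filter.1 (hts hx)).2
    have hval : (m : ℕ) = min (⌊50 * (f x).2⌋.toNat) 49 := by
      rw [← hgx, hg]
    exact strip_mem _ _ hval (hf x).2.1 (hf x).2.2
  have Hi := key i (by simp)
  have Hj := key j (by simp)
  have Hk := key k (by simp)
  have habs : ∀ a b : ℝ, ((m:ℕ):ℝ)/50 ≤ a → a ≤ (((m:ℕ):ℝ)+1)/50 →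
      ((m:ℕ):ℝ)/50 ≤ b → b ≤ (((m:ℕ):ℝ)+1)/50 → |a - b| ≤ 1/50 := by
    intro a b h1 h2 h3 h4
    rw [abs_le]; constructor <;> linarith
  refine ⟨i, j, k, hij, hjk, hik, ?_⟩
  have hfi := hf i; have hfj := hf j; have hfk := hf k
  have := det_bound (f i).1 (f j).1 (f k).1 (f i).2 (f j).2 (f k).2 (1/50)
    hfi.1.1 hfi.1.2 hfj.1.1 hfj.1.2 hfk.1.1 hfk.1.2
    (habs _ _ Hi.1 Hi.2 Hj.1 Hj.2) (habs _ _ Hi.1 Hi.2 Hk.1 Hk.2)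
    (habs _ _ Hj.1 Hj.2 Hk.1 Hk.2)
  linarith
end

section
/- Let K₀ ⊆ K₁ ⊆ ⋯ ⊆ Kₙ be a tower of fields where each K_{i+1} is a quadratic extension of K_i (degree [K_{i+1} : K_i] = 2). If a cubic polynomial P with coefficients in K₀ has no root in K₀, then P has no root in Kₙ. -/
set_option synthInstance.maxHeartbeats 1000000

open Polynomial

lemma cubic_no_root_quadratic_aux {F L : Type*} [Field F] [Field L] [Algebra F L]
    (h2 : Module.finrank F L = 2) (Q : Polynomial F) (hd : Q.degree = 3)
    (h0 : ∀ x : F, Q.eval x ≠ 0) (y : L) : Polynomial.aeval y Q ≠ 0 := by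
  intro hy
  have hfin : FiniteDimensional F L := Module.finite_of_finrank_pos (by omega)
  have hint : IsIntegral F y := IsIntegral.of_finite F y
  set m := minpoly F y with hm
  have hdvd : m ∣ Q := minpoly.dvd F y hy
  have hmle : m.natDegree ≤ 2 := h2 ▸ minpoly.natDegree_le y
  have hmpos : 0 < m.natDegree := minpoly.natDegree_pos hint
  obtain ⟨R, hR⟩ := hdvd
  have hQ0 : Q ≠ 0 := fun h => by simp [h] at hd
  have hm0 : m ≠ 0 := minpoly.ne_zero hint
  have hR0 : R ≠ 0 := fun h => hQ0 (by simp [hR, h])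
  have hQnd : Q.natDegree = 3 := natDegree_eq_of_degree_eq_some hd
  have hsum : m.natDegree + R.natDegree = 3 := by
    rw [← hQnd, hR, natDegree_mul hm0 hR0]
  -- find a degree-1 divisor D of Q
  have key : ∀ D : Polynomial F, D ∣ Q → D.natDegree = 1 → False := by
    intro D hD hD1
    obtain ⟨a, ha⟩ := exists_root_of_degree_eq_one
      ((degree_eq_iff_natDegree_eq_of_pos one_pos).mpr hD1)
    obtain ⟨S, hS⟩ := hD
    exact h0 a (by rw [hS, eval_mul, ha, zero_mul])
  interval_cases h : m.natDegree
  · exact key m ⟨R, hR⟩ h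
  · exact key R ⟨m, by rw [hR, mul_comm]⟩ (by omega)

/-- If `K₀ ⊆ K₁ ⊆ ⋯ ⊆ Kₙ` is a tower of subfields of a field `Ω` in which each
step is a quadratic extension, and a cubic polynomial over `K₀` has no root in
`K₀`, then it has no root in `Kₙ`. -/
theorem cubic_no_root_in_tower_of_quadratic_extensions
    {Ω : Type*} [Field Ω] (n : ℕ) (K : ℕ → Subfield Ω)
    (hle : ∀ i, K i ≤ K (i + 1))
    (hdeg : ∀ i,
      letI : Algebra (K i) (K (i + 1)) := (Subfield.inclusion (hle i)).toAlgebra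
      Module.finrank (K i) (K (i + 1)) = 2)
    (P : Polynomial (K 0)) (hP : P.degree = 3)
    (h0 : ∀ x : K 0, P.eval x = 0 → False) :
    ∀ y : K n,
      Polynomial.eval y
        (P.map (Subfield.inclusion (monotone_nat_of_le_succ hle (Nat.zero_le n)))) ≠ 0 := by
  induction n with
  | zero =>
    intro y hy
    have : (Subfield.inclusion (monotone_nat_of_le_succ hle (Nat.zero_le 0)) :
        K 0 →+* K 0) = RingHom.id _ := RingHom.ext fun x => rfl
    rw [this, Polynomial.map_id] at hy
    exact h0 y hy
  | succ n ih =>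
    intro y hy
    letI : Algebra (K n) (K (n + 1)) := (Subfield.inclusion (hle n)).toAlgebra
    set Q := P.map (Subfield.inclusion (monotone_nat_of_le_succ hle (Nat.zero_le n))) with hQ
    have hQd : Q.degree = 3 := by
      rw [hQ, degree_map]; exact hP
    refine cubic_no_root_quadratic_aux (hdeg n) Q hQd ih y ?_
    rw [aeval_def, ← eval_map, hQ, Polynomial.map_map]
    have : (algebraMap (K n) (K (n + 1))).comp
        (Subfield.inclusion (monotone_nat_of_le_succ hle (Nat.zero_le n))) =
        Subfield.inclusion (monotone_nat_of_le_succ hle (Nat.zero_le (n + 1))) :=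
      RingHom.ext fun x => rfl
    rw [this]
    exact hy
end

section
/- The real number 2^(1/3) does not lie in any field Kₙ at the top of a tower of fields Q = K₀ ⊆ K₁ ⊆ ⋯ ⊆ Kₙ ⊆ ℝ in which each K_{i+1} is a quadratic extension of K_i. (Hence the cube cannot be doubled by ruler and compass.) -/
set_option synthInstance.maxHeartbeats 1000000
set_option maxHeartbeats 2000000

theorem aux_cube (a b : ℝ) (h : a ^ 3 = b ^ 3) : a = b := by
  have := Odd.strictMono_pow (R := ℝ) (n := 3) ⟨1, by norm_num⟩
  exact this.injective h

theorem aux_t3 : ((2:ℝ) ^ ((1:ℝ)/3)) ^ 3 = 2 := by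
  rw [← Real.rpow_natCast ((2:ℝ) ^ ((1:ℝ)/3)) 3, ← Real.rpow_mul (by norm_num)]
  norm_num

theorem aux_irr : Irrational ((2:ℝ) ^ ((1:ℝ)/3)) := by
  refine irrational_nrt_of_notint_nrt 3 2 (by push_cast; exact aux_t3) ?_ (by norm_num)
  rintro ⟨y, hy⟩
  have h3 : ((y:ℝ)) ^ 3 = 2 := by rw [← hy]; exact aux_t3
  have hz : y ^ 3 = 2 := by exact_mod_cast h3
  have h1 : y < 2 := by nlinarith [hz, sq_nonneg y, sq_nonneg (y-1), sq_nonneg (y+1)]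
  have h2 : 0 < y := by nlinarith [hz, sq_nonneg y, sq_nonneg (y-1), sq_nonneg (y+1)]
  interval_cases y <;> omega

/-- The real cube root of 2 does not lie in the top field of any tower
`ℚ = K₀ ⊆ K₁ ⊆ ⋯ ⊆ Kₙ ⊆ ℝ` of subfields of `ℝ` in which each step is a
quadratic extension. Hence the cube cannot be doubled by ruler and compass. -/
theorem cbrt_two_not_in_quadratic_tower
    (n : ℕ) (K : ℕ → Subfield ℝ)
    (hQ : ∀ x : ℝ, x ∈ K 0 ↔ ∃ q : ℚ, (q : ℝ) = x)
    (hle : ∀ i, K i ≤ K (i + 1))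
    (hdeg : ∀ i,
      letI : Algebra (K i) (K (i + 1)) := (Subfield.inclusion (hle i)).toAlgebra
      letI : Module (K i) (K (i + 1)) := Algebra.toModule
      Module.finrank (K i) (K (i + 1)) = 2) :
    (2 : ℝ) ^ ((1 : ℝ) / 3) ∉ K n := by
  set t : ℝ := (2:ℝ) ^ ((1:ℝ)/3) with ht
  have t3 : t ^ 3 = 2 := aux_t3
  induction n with
  | zero =>
    intro h
    obtain ⟨q, hq⟩ := (hQ t).mp h
    exact aux_irr ⟨q, hq⟩
  | succ n ih =>
    intro hx
    letI : Algebra (K n) (K (n+1)) := (Subfield.inclusion (hle n)).toAlgebra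
    letI : Module (K n) (K (n+1)) := Algebra.toModule
    have hfin : FiniteDimensional (K n) (K (n+1)) :=
      .of_finrank_pos (by rw [hdeg n]; norm_num)
    set x : K (n+1) := ⟨t, hx⟩ with hxdef
    have hnli : ¬ LinearIndependent (K n) ![(1 : K (n+1)), x, x*x] := by
      intro h
      have := h.fintype_card_le_finrank
      rw [hdeg n] at this
      simp at this
    obtain ⟨g, hsum, i, hgne⟩ := Fintype.not_linearIndependent_iff.mp hnli
    have hsmul : ∀ (a : K n) (w : K (n+1)), ((a • w : K (n+1)) : ℝ) = (a : ℝ) * (w : ℝ) := by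
      intro a w; rfl
    have hR : (g 0 : ℝ) * 1 + (g 1 : ℝ) * t + (g 2 : ℝ) * (t*t) = 0 := by
      have := congrArg (fun z : K (n+1) => (z : ℝ)) hsum
      simpa [Fin.sum_univ_three, hsmul, hxdef] using this
    by_cases ha : ((g 2 : K n) : ℝ) = 0
    · by_cases hb : ((g 1 : K n) : ℝ) = 0
      · have hc : ((g 0 : K n) : ℝ) = 0 := by rw [ha, hb] at hR; linarith
        apply hgne
        fin_cases i
        · exact Subtype.ext (by simpa using hc)
        · exact Subtype.ext (by simpa using hb)
        · exact Subtype.ext (by simpa using ha)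
      · have htval : t = -((g 0 : K n) : ℝ) / ((g 1 : K n) : ℝ) := by
          rw [ha] at hR
          field_simp
          linarith
        refine ih ?_
        rw [htval]
        exact div_mem (neg_mem (SetLike.coe_mem _)) (SetLike.coe_mem _)
    · obtain ⟨B, hBdef⟩ : ∃ B : ℝ, B = -((g 1 : K n) : ℝ) / ((g 2 : K n) : ℝ) := ⟨_, rfl⟩
      obtain ⟨C, hCdef⟩ : ∃ C : ℝ, C = -((g 0 : K n) : ℝ) / ((g 2 : K n) : ℝ) := ⟨_, rfl⟩
      have hB : B ∈ K n := hBdef ▸ div_mem (neg_mem (SetLike.coe_mem _)) (SetLike.coe_mem _)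
      have hC : C ∈ K n := hCdef ▸ div_mem (neg_mem (SetLike.coe_mem _)) (SetLike.coe_mem _)
      have hx2 : t * t = B * t + C := by
        rw [hBdef, hCdef]
        field_simp
        linear_combination hR
      have key : (B*B + C) * t + B*C = 2 := by
        have e1 : t^3 = t * (t*t) := by ring
        rw [hx2] at e1
        have e2 : t^3 = B*(t*t) + C*t := by rw [e1]; ring
        rw [hx2] at e2
        linear_combination t3 - e2
      by_cases hBC : B*B + C = 0
      · have hBc : B*C = 2 := by rw [hBC] at key; linarith
        have hCv : C = -(B*B) := by linarith
        have hcube : (-B)^3 = 2 := by rw [hCv] at hBc; linear_combination hBc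
        have heq : -B = t := aux_cube _ _ (by rw [t3]; exact hcube)
        exact ih (heq ▸ neg_mem hB)
      · have htval : t = (2 - B*C)/(B*B + C) := by
          rw [eq_div_iff hBC]
          linear_combination key
        refine ih ?_
        rw [htval]
        have h2 : (2:ℝ) ∈ K n := by
          have := add_mem (one_mem (K n)) (one_mem (K n))
          rw [one_add_one_eq_two] at this
          exact this
        exact div_mem (sub_mem h2 (mul_mem hB hC)) (add_mem (mul_mem hB hB) hC)
end
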